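/- Let S = V(f) ⊂ ℙ³(ℂ) with f = w²z² + wz·Q₂(x,y) + H₄(x,y,z), where Q₂ is homogeneous of degree 2 in x,y and H₄ is homogeneous of degree 4 in x,y,z, and suppose O = (0:0:0:1) is an isolated point of the singular locus of S. Then every line contained in S that passes through O is contained in the plane {z = 0}, and there are at most four such lines. -/

import Mathlib

/-!
A line through `O = (0:0:0:1)` is spanned by `O` and a point `v` with `w = 0`, and on it the
quartic restricts to `t ↦ t²z(v)² + t z(v) Q₂(v) + H₄(v)`. So the line lies in `S` iff
`z(v) = 0` and `H₄(v) = 0`: the lines through `O` in `S` are the joins of `O` with the zeros in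
`ℙ¹` of the binary quartic `h(x, y) = H₄(x, y, 0)`, and there are at most four of them
once `h ≠ 0`. If `h = 0`, every point `(x : y : 0 : 1)` with `Q₂(x, y) + ∂H₄/∂z(x, y, 0) = 0`
is singular on `S`; the zeros of a quadratic plus a cubic binary form accumulate at the
origin, so `O` would not be an isolated singular point.
-/


open MvPolynomial

noncomputable section

abbrev P3 := Projectivization ℂ (Fin 4 → ℂ)

/-- The quotient topology on `ℙ³(ℂ)` induced from `ℂ⁴ ∖ {0}`. -/
instance : TopologicalSpace P3 :=
  inferInstanceAs (TopologicalSpace (Quotient (projectivizationSetoid ℂ (Fin 4 → ℂ))))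

/-- A line in `ℙ³(ℂ)`: the projectivization of a 2-dimensional linear subspace of `ℂ⁴`. -/
def IsLine (L : Set P3) : Prop :=
  ∃ W : Submodule ℂ (Fin 4 → ℂ), Module.finrank ℂ W = 2 ∧
    L = {P : P3 | P.submodule ≤ W}

/-- The zero set in `ℙ³(ℂ)` of a (homogeneous) polynomial. -/
def zeroSet (f : MvPolynomial (Fin 4) ℂ) : Set P3 :=
  {P | eval P.rep f = 0}

/-- `P` is a singular point of `V(f)`: `P ∈ V(f)` and all first partials vanish at `P`. -/
def IsSingPt (f : MvPolynomial (Fin 4) ℂ) (P : P3) : Prop :=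
  eval P.rep f = 0 ∧ ∀ i, eval P.rep (pderiv i f) = 0

/-- `P` is an isolated point of the set `T`. -/
def IsIsolatedPtOf (P : P3) (T : Set P3) : Prop :=
  P ∈ T ∧ ∃ U : Set P3, IsOpen U ∧ P ∈ U ∧ U ∩ T = {P}

/-- The point `O = (0:0:0:1)`. -/
def ptO : P3 :=
  Projectivization.mk ℂ ![0, 0, 0, 1] (by
    intro h
    simpa using congrFun h 3)

open Filter Topology Projectivization

namespace Polynomial

theorem coeff_prod_sum_of_natDegree_le {R ι : Type*} [CommSemiring R] {s : Finset ι}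
    {f : ι → R[X]} {e : ι → ℕ} (hf : ∀ i ∈ s, (f i).natDegree ≤ e i) :
    (∏ i ∈ s, f i).coeff (∑ i ∈ s, e i) = ∏ i ∈ s, (f i).coeff (e i) := by
  classical
  induction s using Finset.induction_on with
  | empty => simp
  | insert a s ha ih =>
    rw [Finset.prod_insert ha, Finset.sum_insert ha, Finset.prod_insert ha,
      coeff_mul_add_eq_of_natDegree_le (hf a (Finset.mem_insert_self a s))
        ((natDegree_prod_le _ _).trans (Finset.sum_le_sum fun i hi =>
          hf i (Finset.mem_insert_of_mem hi))),
      ih fun i hi => hf i (Finset.mem_insert_of_mem hi)]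

end Polynomial

namespace MvPolynomial

section CommSemiring

variable {R σ τ : Type*} [CommSemiring R]

theorem IsHomogeneous.eval_smul {φ : MvPolynomial σ R} {n : ℕ} (hφ : φ.IsHomogeneous n)
    (c : R) (u : σ → R) : eval (c • u) φ = c ^ n * eval u φ := by
  simp only [eval_eq, Finset.mul_sum]
  refine Finset.sum_congr rfl fun d hd => ?_
  simp only [Pi.smul_apply, smul_eq_mul, mul_pow, Finset.prod_mul_distrib,
    Finset.prod_pow_eq_pow_sum, ← hφ.degree_eq_sum_deg_support hd]
  ring

theorem eval_congr_of_mem_supported {s : Set σ} {p : MvPolynomial σ R}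
    (hp : p ∈ supported R s) {u v : σ → R} (huv : Set.EqOn u v s) : eval u p = eval v p :=
  hom_congr_vars (by ext; simp) (fun i hi _ => by simpa using huv (mem_supported.mp hp hi)) rfl

theorem pderiv_mem_supported {s : Set σ} {p : MvPolynomial σ R} (hp : p ∈ supported R s)
    (i : σ) : pderiv i p ∈ supported R s := by
  by_cases hi : i ∈ s
  · rw [supported_eq_range_rename] at hp ⊢
    obtain ⟨q, rfl⟩ := hp
    refine ⟨pderiv ⟨i, hi⟩ q, ?_⟩
    simp only [AlgHom.toRingHom_eq_coe, RingHom.coe_coe]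
    exact (pderiv_rename Subtype.val_injective _ _).symm
  · rw [pderiv_eq_zero_of_notMem_vars fun hv => hi (mem_supported.mp hp hv)]
    exact zero_mem _

theorem pderiv_aeval_of_pderiv_eq_single [DecidableEq σ] (g : σ → MvPolynomial τ R) (i : σ)
    (j : τ) (hg : ∀ k, pderiv j (g k) = (Pi.single i 1 : σ → MvPolynomial τ R) k)
    (p : MvPolynomial σ R) : pderiv j (aeval g p) = aeval g (pderiv i p) := by
  induction p using MvPolynomial.induction_on with
  | C a => simp
  | add p q hp hq => simp only [map_add, hp, hq]
  | mul_X p k hp =>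
    simp only [map_mul, aeval_X, Derivation.leibniz, smul_eq_mul, hp, hg, pderiv_X, map_add]
    by_cases hk : k = i
    · subst hk; simp
    · simp [hk]

def lineRestriction (φ : MvPolynomial σ R) (c d : σ → R) : Polynomial R :=
  aeval (fun i => Polynomial.C (d i) + Polynomial.C (c i) * Polynomial.X) φ

theorem eval_lineRestriction (φ : MvPolynomial σ R) (c d : σ → R) (t : R) :
    (φ.lineRestriction c d).eval t = eval (d + t • c) φ := by
  rw [lineRestriction, ← Polynomial.coe_aeval_eq_eval, comp_aeval_apply]
  change _ = aeval (d + t • c) φ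
  congr 2
  funext i
  simp only [map_add, map_mul, Polynomial.aeval_C, Polynomial.aeval_X, Pi.add_apply,
    Pi.smul_apply, smul_eq_mul, Algebra.algebraMap_self, RingHom.id_apply]
  ring

theorem lineRestriction_eq_sum (φ : MvPolynomial σ R) (c d : σ → R) :
    φ.lineRestriction c d = ∑ m ∈ φ.support, Polynomial.C (coeff m φ) *
      ∏ i ∈ m.support, (Polynomial.C (d i) + Polynomial.C (c i) * Polynomial.X) ^ m i :=
  eval₂_eq _ _ _

theorem natDegree_prod_linear_pow_le_and_coeff (c d : σ → R) (m : σ →₀ ℕ) :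
    (∏ i ∈ m.support, (Polynomial.C (d i) + Polynomial.C (c i) * Polynomial.X) ^ m i).natDegree
        ≤ ∑ i ∈ m.support, m i ∧
      (∏ i ∈ m.support, (Polynomial.C (d i) + Polynomial.C (c i) * Polynomial.X) ^ m i).coeff
        (∑ i ∈ m.support, m i) = ∏ i ∈ m.support, c i ^ m i := by
  have hlin : ∀ i, (Polynomial.C (d i) + Polynomial.C (c i) * Polynomial.X).natDegree ≤ 1 :=
    fun i => by compute_degree
  have hpow : ∀ i ∈ m.support,
      ((Polynomial.C (d i) + Polynomial.C (c i) * Polynomial.X) ^ m i).natDegree ≤ m i :=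
    fun i _ => (Polynomial.natDegree_pow_le_of_le _ (hlin i)).trans (by rw [mul_one])
  refine ⟨(Polynomial.natDegree_prod_le _ _).trans (Finset.sum_le_sum hpow), ?_⟩
  rw [Polynomial.coeff_prod_sum_of_natDegree_le hpow]
  refine Finset.prod_congr rfl fun i _ => ?_
  simpa using Polynomial.coeff_pow_of_natDegree_le (m := m i) (hlin i)

variable {φ : MvPolynomial σ R} {n : ℕ}

theorem IsHomogeneous.natDegree_lineRestriction_le (hφ : φ.IsHomogeneous n) (c d : σ → R) :
    (φ.lineRestriction c d).natDegree ≤ n := by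
  rw [lineRestriction_eq_sum]
  refine Polynomial.natDegree_sum_le_of_forall_le _ _ fun m hm => ?_
  refine (Polynomial.natDegree_C_mul_le _ _).trans ?_
  rw [hφ.degree_eq_sum_deg_support hm]
  exact (natDegree_prod_linear_pow_le_and_coeff c d m).1

theorem IsHomogeneous.coeff_lineRestriction (hφ : φ.IsHomogeneous n) (c d : σ → R) :
    (φ.lineRestriction c d).coeff n = eval c φ := by
  rw [lineRestriction_eq_sum, Polynomial.finsetSum_coeff, eval_eq]
  refine Finset.sum_congr rfl fun m hm => ?_
  rw [Polynomial.coeff_C_mul, hφ.degree_eq_sum_deg_support hm,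
    (natDegree_prod_linear_pow_le_and_coeff c d m).2]

end CommSemiring

section Field

variable {K σ : Type*} [Field K] {n : ℕ}

theorem IsHomogeneous.eval_rep_mk_eq_zero_iff {φ : MvPolynomial σ K} (hφ : φ.IsHomogeneous n)
    {u : σ → K} (hu : u ≠ 0) : eval (mk K u hu).rep φ = 0 ↔ eval u φ = 0 := by
  obtain ⟨a, ha⟩ := exists_smul_eq_mk_rep K u hu
  rw [← ha, Units.smul_def, hφ.eval_smul, mul_eq_zero, or_iff_right (pow_ne_zero _ a.ne_zero)]

variable {b : MvPolynomial (Fin 2) K}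

theorem IsHomogeneous.exists_ne_zero_eval_eq_zero [IsAlgClosed K] (hb : b.IsHomogeneous n)
    (hn : n ≠ 0) : ∃ z ≠ 0, eval z b = 0 := by
  by_cases h10 : eval ![1, 0] b = 0
  · exact ⟨![1, 0], by simp, h10⟩
  have hdeg : (b.lineRestriction ![1, 0] ![0, 1]).natDegree = n :=
    Polynomial.natDegree_eq_of_le_of_coeff_ne_zero (hb.natDegree_lineRestriction_le _ _)
      (by rwa [hb.coeff_lineRestriction])
  obtain ⟨t, ht⟩ := IsAlgClosed.exists_root _
    (Polynomial.degree_ne_of_natDegree_ne (hdeg.trans_ne hn) : _ ≠ ((0 : ℕ) : WithBot ℕ))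
  refine ⟨![0, 1] + t • ![1, 0], fun h => by simpa using congrFun h 1, ?_⟩
  rwa [← eval_lineRestriction]

theorem IsHomogeneous.setOf_eval_rep_eq_zero_subset [DecidableEq K] {c d : Fin 2 → K}
    (hb : b.IsHomogeneous n) (hc : eval c b ≠ 0) (hspan : Submodule.span K {d, c} = ⊤)
    (hdc : ∀ t : K, d + t • c ≠ 0) :
    {P : Projectivization K (Fin 2 → K) | eval P.rep b = 0} ⊆
      (fun t => mk K (d + t • c) (hdc t)) '' (b.lineRestriction c d).roots.toFinset := by
  have hr0 : b.lineRestriction c d ≠ 0 := fun h =>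
    hc (by rw [← hb.coeff_lineRestriction c d, h, Polynomial.coeff_zero])
  intro P hP
  obtain ⟨x, y, hxy⟩ := Submodule.mem_span_pair.mp (hspan ▸ Submodule.mem_top : P.rep ∈ _)
  have hx : x ≠ 0 := by
    rintro rfl
    have hy : y ≠ 0 := by rintro rfl; simp [P.rep_nonzero.symm] at hxy
    rw [Set.mem_ofPred_eq, ← hxy, zero_smul, zero_add, hb.eval_smul] at hP
    exact hc ((mul_eq_zero.mp hP).resolve_left (pow_ne_zero _ hy))
  have hP' : P.rep = x • (d + (y / x) • c) := by
    rw [← hxy, smul_add, smul_smul, mul_div_cancel₀ _ hx]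
  refine ⟨y / x, ?_, ?_⟩
  · rw [Finset.mem_coe, Multiset.mem_toFinset, Polynomial.mem_roots hr0, Polynomial.IsRoot,
      eval_lineRestriction]
    rw [Set.mem_ofPred_eq, hP', hb.eval_smul] at hP
    exact (mul_eq_zero.mp hP).resolve_left (pow_ne_zero _ hx)
  · rw [eq_comm]
    conv_lhs => rw [← P.mk_rep]
    exact (mk_eq_mk_iff K _ _ _ _).mpr ⟨Units.mk0 x hx, hP'.symm⟩

theorem IsHomogeneous.finite_and_ncard_le [Infinite K] (hb : b.IsHomogeneous n) (hn : n ≠ 0)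
    (hb0 : b ≠ 0) :
    {P : Projectivization K (Fin 2 → K) | eval P.rep b = 0}.Finite ∧
      {P : Projectivization K (Fin 2 → K) | eval P.rep b = 0}.ncard ≤ n := by
  classical
  obtain ⟨c, hc⟩ : ∃ c, eval c b ≠ 0 := by
    by_contra! h
    exact hb0 (MvPolynomial.funext fun x => by simpa using h x)
  have hc0 : c ≠ 0 := by
    rintro rfl
    exact hc (by simpa [zero_pow hn] using hb.eval_smul 0 0)
  obtain ⟨d, hcd⟩ := exists_linearIndependent_pair_of_one_lt_finrank
    (by simp : 1 < Module.finrank K (Fin 2 → K)) hc0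
  have hspan : Submodule.span K {d, c} = ⊤ := by
    simpa [Matrix.range_cons_cons_empty] using hcd.span_eq_top_of_card_eq_finrank (by simp)
  have hdc : ∀ t : K, d + t • c ≠ 0 := fun t h =>
    one_ne_zero ((LinearIndependent.pair_iff.mp hcd) t 1 (by rw [← h]; module)).2
  have hsub := hb.setOf_eval_rep_eq_zero_subset hc hspan hdc
  have hfin := ((b.lineRestriction c d).roots.toFinset.finite_toSet).image
    fun t => mk K (d + t • c) (hdc t)
  refine ⟨hfin.subset hsub, (Set.ncard_le_ncard hsub hfin).trans ?_⟩
  calc _ ≤ ((b.lineRestriction c d).roots.toFinset : Set K).ncard :=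
        Set.ncard_image_le (Finset.finite_toSet _)
    _ ≤ (b.lineRestriction c d).natDegree := by
      rw [Set.ncard_coe_finset]
      exact (Multiset.toFinset_card_le _).trans (Polynomial.card_roots' _)
    _ ≤ n := hb.natDegree_lineRestriction_le c d

end Field

end MvPolynomial

section PuncturedZeros

variable {b g : MvPolynomial (Fin 2) ℂ} {m : ℕ}

theorem frequently_eval_add_eval_eq_zero_of_common_zero (hb : b.IsHomogeneous m)
    (hg : g.IsHomogeneous (m + 1)) {p : Fin 2 → ℂ} (hp : p ≠ 0) (hbp : eval p b = 0)
    (hgp : eval p g = 0) : ∃ᶠ z in 𝓝[≠] (0 : Fin 2 → ℂ), eval z b + eval z g = 0 := by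
  have hlim : Tendsto (fun t : ℂ => t • p) (𝓝[≠] 0) (𝓝[≠] 0) := by
    refine tendsto_nhdsWithin_iff.mpr ⟨?_, ?_⟩
    · simpa using ((by fun_prop : Continuous fun t : ℂ => t • p).tendsto 0).mono_left
        nhdsWithin_le_nhds
    · filter_upwards [self_mem_nhdsWithin] with t ht using smul_ne_zero ht hp
  refine hlim.frequently (Eventually.frequently (Eventually.of_forall fun t => ?_))
  simp [hb.eval_smul, hg.eval_smul, hbp, hgp]

theorem frequently_eval_add_eval_eq_zero_of_eval_ne_zero (hb : b.IsHomogeneous m)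
    (hg : g.IsHomogeneous (m + 1)) {v w : Fin 2 → ℂ} (hv : v ≠ 0) (hbv : eval v b = 0)
    (hgv : eval v g ≠ 0) (hbw : eval w b ≠ 0) :
    ∃ᶠ z in 𝓝[≠] (0 : Fin 2 → ℂ), eval z b + eval z g = 0 := by
  set u := w - v
  set B : ℂ → ℂ := fun ε => eval (v + ε • u) b
  set G : ℂ → ℂ := fun ε => eval (v + ε • u) g
  have hline : Continuous fun ε : ℂ => v + ε • u := by fun_prop
  have hBc : Continuous B := (continuous_eval b).comp hline
  have hGc : Continuous G := (continuous_eval g).comp hline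
  have hG0 : G 0 ≠ 0 := by simpa [G] using hgv
  -- On the line `ℂ • (v + ε • u)` the zero of `b + g` is `τ ε • (v + ε • u)`,
  -- and `τ ε → 0` because `B 0 = b v = 0`.
  set τ : ℂ → ℂ := fun ε => -B ε / G ε
  set z : ℂ → Fin 2 → ℂ := fun ε => τ ε • (v + ε • u)
  have hz : ContinuousAt z 0 :=
    ((hBc.continuousAt.neg).div hGc.continuousAt hG0).smul hline.continuousAt
  have hz0 : z 0 = 0 := by simp [z, τ, B, hbv]
  have hB : ∀ᶠ ε in 𝓝[≠] (0 : ℂ), B ε ≠ 0 := by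
    have hr0 : b.lineRestriction u v ≠ 0 := fun h => hbw <| by
      simpa [u, eval_lineRestriction] using congrArg (Polynomial.eval 1) h
    filter_upwards [(Polynomial.eventually_cofinite_not_isRoot hr0).filter_mono
      (nhdsNE_le_cofinite 0)] with ε hε
    simpa [Polynomial.IsRoot, eval_lineRestriction] using hε
  have hG : ∀ᶠ ε in 𝓝[≠] (0 : ℂ), G ε ≠ 0 :=
    nhdsWithin_le_nhds (hGc.continuousAt.eventually_ne hG0)
  have hvu : ∀ᶠ ε in 𝓝[≠] (0 : ℂ), v + ε • u ≠ 0 :=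
    nhdsWithin_le_nhds (hline.continuousAt.eventually_ne (by simpa using hv))
  have hlim : Tendsto z (𝓝[≠] 0) (𝓝[≠] 0) := by
    refine tendsto_nhdsWithin_iff.mpr ⟨hz0 ▸ hz.tendsto.mono_left nhdsWithin_le_nhds, ?_⟩
    filter_upwards [hB, hG, hvu] with ε hBε hGε hvuε
    exact smul_ne_zero (div_ne_zero (neg_ne_zero.mpr hBε) hGε) hvuε
  refine hlim.frequently (Eventually.frequently ?_)
  filter_upwards [hG] with ε hGε
  simp only [z, hb.eval_smul, hg.eval_smul]
  have hτG : τ ε * G ε = -B ε := div_mul_cancel₀ _ hGε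
  calc τ ε ^ m * B ε + τ ε ^ (m + 1) * G ε = τ ε ^ m * (B ε + τ ε * G ε) := by ring
    _ = 0 := by rw [hτG, add_neg_cancel, mul_zero]

theorem frequently_eval_add_eval_eq_zero (hb : b.IsHomogeneous m)
    (hg : g.IsHomogeneous (m + 1)) (hm : m ≠ 0) :
    ∃ᶠ z in 𝓝[≠] (0 : Fin 2 → ℂ), eval z b + eval z g = 0 := by
  by_cases hcommon : ∃ p ≠ 0, eval p b = 0 ∧ eval p g = 0
  · obtain ⟨p, hp, hbp, hgp⟩ := hcommon
    exact frequently_eval_add_eval_eq_zero_of_common_zero hb hg hp hbp hgp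
  push Not at hcommon
  obtain ⟨v, hv, hbv⟩ := hb.exists_ne_zero_eval_eq_zero hm
  obtain ⟨w, hbw⟩ : ∃ w, eval w b ≠ 0 := by
    by_contra! h
    obtain ⟨p, hp, hgp⟩ := hg.exists_ne_zero_eval_eq_zero m.succ_ne_zero
    exact hcommon p hp (h p) hgp
  exact frequently_eval_add_eval_eq_zero_of_eval_ne_zero hb hg hv hbv (hcommon v hv hbv) hbw

end PuncturedZeros

theorem Submodule.exists_mem_ne_zero_apply_eq_zero {K V : Type*} [Field K] [AddCommGroup V]
    [Module K V] {W : Submodule K V} (hW : 1 < Module.finrank K W) (ℓ : V →ₗ[K] K) :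
    ∃ v ∈ W, v ≠ 0 ∧ ℓ v = 0 := by
  have := Module.finite_of_finrank_pos (zero_lt_one.trans hW)
  obtain ⟨⟨v, hvW⟩, hv, hv0⟩ := Submodule.exists_mem_ne_zero_of_ne_bot
    (LinearMap.ker_ne_bot_of_finrank_lt (f := ℓ ∘ₗ W.subtype) (by simpa using hW))
  exact ⟨v, hvW, by simpa using hv0, hv⟩

section LinesInP3

def lineThrough (P Q : P3) : Set P3 :=
  {R | R.submodule ≤ P.submodule ⊔ Q.submodule}

theorem IsLine.eq_lineThrough {L : Set P3} (hL : IsLine L) {P Q : P3} (hP : P ∈ L)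
    (hQ : Q ∈ L) (hPQ : P ≠ Q) : L = lineThrough P Q := by
  obtain ⟨W, hW, rfl⟩ := hL
  have hmem : ∀ R : P3, R.submodule ≤ W → mk ℂ R.rep R.rep_nonzero ∈ W.projectivization :=
    fun R hR => by rwa [R.mk_rep, Submodule.mem_projectivization_iff_submodule_le]
  rw [line_unique' P.rep_nonzero Q.rep_nonzero (linearIndependent_pair_iff_ne.mpr hPQ) W hW
    (hmem P hP) (hmem Q hQ), Submodule.span_insert, lineThrough, submodule_eq, submodule_eq]

theorem lineThrough_subset_setOf_rep_eq_zero {u v : Fin 4 → ℂ} (hu : u ≠ 0) (hv : v ≠ 0)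
    {i : Fin 4} (hui : u i = 0) (hvi : v i = 0) :
    lineThrough (mk ℂ u hu) (mk ℂ v hv) ⊆ {R | R.rep i = 0} := by
  intro R hR
  have hle : (mk ℂ u hu).submodule ⊔ (mk ℂ v hv).submodule ≤
      LinearMap.ker (LinearMap.proj i) := by
    simp [submodule_mk, hui, hvi]
  exact hle (hR (R.submodule_eq ▸ Submodule.mem_span_singleton_self R.rep))

def vecO : Fin 4 → ℂ := ![0, 0, 0, 1]

theorem vecO_ne_zero : vecO ≠ 0 := fun h => by simpa [vecO] using congrFun h 3

theorem ptO_submodule : ptO.submodule = Submodule.span ℂ {vecO} := submodule_mk _ _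

theorem eval_add_smul_vecO {p : MvPolynomial (Fin 4) ℂ}
    (hp : p ∈ supported ℂ ({0, 1, 2} : Set (Fin 4))) (u : Fin 4 → ℂ) (t : ℂ) :
    eval (u + t • vecO) p = eval u p :=
  eval_congr_of_mem_supported hp fun i hi => by
    rcases hi with rfl | rfl | rfl <;> simp [vecO]

def planeIncl : (Fin 2 → ℂ) →ₗ[ℂ] Fin 4 → ℂ where
  toFun q := ![q 0, q 1, 0, 0]
  map_add' _ _ := by ext i; fin_cases i <;> simp
  map_smul' _ _ := by ext i; fin_cases i <;> simp

theorem planeIncl_injective : Function.Injective planeIncl := fun q q' h => by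
  ext i
  fin_cases i
  exacts [congrFun h 0, congrFun h 1]

def chartPt (q : Fin 2 → ℂ) : P3 :=
  mk ℂ (planeIncl q + vecO) fun h => by simpa [planeIncl, vecO] using congrFun h 3

theorem continuous_chartPt : Continuous chartPt :=
  continuous_quotient_mk'.comp
    ((planeIncl.continuous_of_finiteDimensional.add continuous_const).subtype_mk _)

theorem chartPt_eq_ptO_iff {q : Fin 2 → ℂ} : chartPt q = ptO ↔ q = 0 := by
  refine ⟨fun h => ?_, fun h => ?_⟩
  · obtain ⟨a, ha⟩ := (mk_eq_mk_iff ℂ _ _ _ _).mp h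
    ext i
    fin_cases i
    · simpa [planeIncl, vecO] using (congrFun ha 0).symm
    · simpa [planeIncl, vecO] using (congrFun ha 1).symm
  · subst h
    simp only [chartPt, map_zero, zero_add]
    rfl

end LinesInP3

section Quartic

def toBinaryForm (p : MvPolynomial (Fin 4) ℂ) : MvPolynomial (Fin 2) ℂ :=
  aeval ![X 0, X 1, 0, 0] p

theorem eval_toBinaryForm (p : MvPolynomial (Fin 4) ℂ) (q : Fin 2 → ℂ) :
    eval q (toBinaryForm p) = eval (planeIncl q) p := by
  change aeval q (aeval _ p) = aeval (planeIncl q) p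
  rw [comp_aeval_apply]
  congr 2
  funext i
  fin_cases i <;> simp [planeIncl]

theorem isHomogeneous_toBinaryForm {p : MvPolynomial (Fin 4) ℂ} {n : ℕ}
    (hp : p.IsHomogeneous n) : (toBinaryForm p).IsHomogeneous n := by
  have h := hp.aeval (![X 0, X 1, 0, 0] : Fin 4 → MvPolynomial (Fin 2) ℂ) fun i => by
    fin_cases i
    exacts [isHomogeneous_X ℂ 0, isHomogeneous_X ℂ 1, isHomogeneous_zero _ _ _,
      isHomogeneous_zero _ _ _]
  rw [one_mul] at h
  exact h

theorem pderiv_toBinaryForm (j : Fin 2) (p : MvPolynomial (Fin 4) ℂ) :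
    pderiv j (toBinaryForm p) = toBinaryForm (pderiv (Fin.castLE (by norm_num) j) p) :=
  pderiv_aeval_of_pderiv_eq_single _ _ _ (fun k => by
    fin_cases j <;> fin_cases k <;> simp [pderiv_X]) p

def quartic (Q H : MvPolynomial (Fin 4) ℂ) : MvPolynomial (Fin 4) ℂ :=
  X 3 ^ 2 * X 2 ^ 2 + X 3 * X 2 * Q + H

variable {Q H : MvPolynomial (Fin 4) ℂ} {n : ℕ}

theorem isHomogeneous_quartic (hQ : Q.IsHomogeneous 2) (hH : H.IsHomogeneous 4) :
    (quartic Q H).IsHomogeneous 4 :=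
  (((isHomogeneous_X_pow 3 2).mul (isHomogeneous_X_pow 2 2)).add
    (((isHomogeneous_X ℂ 3).mul (isHomogeneous_X ℂ 2)).mul hQ)).add hH

theorem exists_eq_lineThrough_of_isLine (hQ : Q ∈ supported ℂ ({0, 1, 2} : Set (Fin 4)))
    (hH : H ∈ supported ℂ ({0, 1, 2} : Set (Fin 4))) (hfh : (quartic Q H).IsHomogeneous n)
    {L : Set P3} (hL : IsLine L) (hLS : L ⊆ zeroSet (quartic Q H)) (hO : ptO ∈ L) :
    ∃ v, ∃ hv : v ≠ 0,
      v 2 = 0 ∧ v 3 = 0 ∧ eval v H = 0 ∧ L = lineThrough ptO (mk ℂ v hv) := by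
  obtain ⟨W, hW, hLW⟩ := id hL
  obtain ⟨v, hvW, hv0, hv3⟩ := Submodule.exists_mem_ne_zero_apply_eq_zero (W := W) (by omega)
    (LinearMap.proj (R := ℂ) (φ := fun _ : Fin 4 => ℂ) 3)
  replace hv3 : v 3 = 0 := hv3
  have hPL : mk ℂ v hv0 ∈ L := by
    rw [hLW, Set.mem_ofPred_eq, submodule_mk, Submodule.span_singleton_le_iff_mem]
    exact hvW
  have hPO : ptO ≠ mk ℂ v hv0 := fun h => by
    obtain ⟨a, ha⟩ := (mk_eq_mk_iff ℂ _ _ _ _).mp h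
    simpa [vecO, hv3] using congrFun ha 3
  have hLeq := IsLine.eq_lineThrough hL hO hPL hPO
  have hvanish : ∀ t : ℂ, eval (v + t • vecO) (quartic Q H) = 0 := by
    intro t
    have hne : v + t • vecO ≠ 0 := fun h => by
      have ht : t = 0 := by simpa [vecO, hv3] using congrFun h 3
      exact hv0 (by simpa [ht] using h)
    refine (hfh.eval_rep_mk_eq_zero_iff hne).mp (hLS ?_)
    rw [hLeq, lineThrough, Set.mem_ofPred_eq, submodule_mk, Submodule.span_singleton_le_iff_mem,
      ptO_submodule, submodule_mk, add_comm]
    exact Submodule.add_mem _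
      (Submodule.mem_sup_left (Submodule.smul_mem _ _ (Submodule.mem_span_singleton_self _)))
      (Submodule.mem_sup_right (Submodule.mem_span_singleton_self _))
  have hquad : ∀ t : ℂ, t ^ 2 * v 2 ^ 2 + t * (v 2 * eval v Q) + eval v H = 0 := by
    intro t
    rw [← hvanish t]
    simp only [quartic, map_add, map_mul, map_pow, eval_X, eval_add_smul_vecO hQ,
      eval_add_smul_vecO hH, Pi.add_apply, Pi.smul_apply, smul_eq_mul, hv3]
    simp [vecO]
    ring
  have hv2 : v 2 = 0 := pow_eq_zero_iff two_ne_zero |>.mp <| by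
    linear_combination (hquad 1 + hquad (-1)) / 2 - hquad 0
  exact ⟨v, hv0, hv2, hv3, by simpa using hquad 0, hLeq⟩

theorem setOf_lines_through_ptO_subset_image (hQ : Q ∈ supported ℂ ({0, 1, 2} : Set (Fin 4)))
    (hHh : H.IsHomogeneous 4) (hH : H ∈ supported ℂ ({0, 1, 2} : Set (Fin 4)))
    (hfh : (quartic Q H).IsHomogeneous n) :
    {L : Set P3 | IsLine L ∧ L ⊆ zeroSet (quartic Q H) ∧ ptO ∈ L} ⊆
      (fun P : Projectivization ℂ (Fin 2 → ℂ) =>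
        lineThrough ptO (P.map planeIncl planeIncl_injective)) ''
        {P | eval P.rep (toBinaryForm H) = 0} := by
  rintro L ⟨hL, hLS, hO⟩
  obtain ⟨v, hv, hv2, hv3, hHv, rfl⟩ := exists_eq_lineThrough_of_isLine hQ hH hfh hL hLS hO
  have hvq : planeIncl ![v 0, v 1] = v := by
    ext i; fin_cases i <;> simp [planeIncl, hv2, hv3]
  have hq : ![v 0, v 1] ≠ 0 := fun h => hv (by rw [← hvq, h, map_zero])
  refine ⟨mk ℂ ![v 0, v 1] hq, ?_, by simp only [map_mk, hvq]⟩
  rw [Set.mem_ofPred_eq, (isHomogeneous_toBinaryForm hHh).eval_rep_mk_eq_zero_iff,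
    eval_toBinaryForm, hvq, hHv]

theorem isSingPt_chartPt (hQ : Q ∈ supported ℂ ({0, 1, 2} : Set (Fin 4)))
    (hH : H ∈ supported ℂ ({0, 1, 2} : Set (Fin 4))) (hfh : (quartic Q H).IsHomogeneous n)
    (hH0 : toBinaryForm H = 0) {q : Fin 2 → ℂ}
    (hq : eval q (toBinaryForm Q) + eval q (toBinaryForm (pderiv 2 H)) = 0) :
    IsSingPt (quartic Q H) (chartPt q) := by
  suffices h : ∀ u : Fin 4 → ℂ,
      (∀ p ∈ supported ℂ ({0, 1, 2} : Set (Fin 4)), eval u p = eval q (toBinaryForm p)) →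
      u 2 = 0 → u 3 = 1 →
      eval u (quartic Q H) = 0 ∧ ∀ i, eval u (pderiv i (quartic Q H)) = 0 by
    obtain ⟨h0, hi⟩ := h (planeIncl q + vecO)
      (fun p hp => by rw [eval_toBinaryForm, ← eval_add_smul_vecO hp (planeIncl q) 1, one_smul])
      (by simp [planeIncl, vecO]) (by simp [planeIncl, vecO])
    exact ⟨(hfh.eval_rep_mk_eq_zero_iff _).mpr h0,
      fun i => (hfh.pderiv.eval_rep_mk_eq_zero_iff _).mpr (hi i)⟩
  intro u hev hu2 hu3
  -- `H` vanishes on the plane `z = 0`, hence so do its derivatives along that plane.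
  have hdH : ∀ j : Fin 2, eval u (pderiv (Fin.castLE (by norm_num) j) H) = 0 := fun j => by
    rw [hev _ (pderiv_mem_supported hH _), ← pderiv_toBinaryForm, hH0, map_zero, map_zero]
  have hH3 : pderiv 3 H = 0 :=
    pderiv_eq_zero_of_notMem_vars fun h => by simpa using mem_supported.mp hH h
  refine ⟨by simp [quartic, hu2, hev H hH, hH0], fun i => ?_⟩
  fin_cases i
  · simpa [quartic, Derivation.leibniz, pderiv_X, hu2] using hdH 0
  · simpa [quartic, Derivation.leibniz, pderiv_X, hu2] using hdH 1
  · simpa [quartic, Derivation.leibniz, pderiv_X, hu2, hu3, hev Q hQ,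
      hev _ (pderiv_mem_supported hH 2)] using hq
  · simp [quartic, Derivation.leibniz, pderiv_X, hu2, hH3]

theorem toBinaryForm_ne_zero_of_isIsolatedPtOf (hQh : Q.IsHomogeneous 2)
    (hQ : Q ∈ supported ℂ ({0, 1, 2} : Set (Fin 4))) (hHh : H.IsHomogeneous 4)
    (hH : H ∈ supported ℂ ({0, 1, 2} : Set (Fin 4)))
    (hiso : IsIsolatedPtOf ptO {P | IsSingPt (quartic Q H) P}) : toBinaryForm H ≠ 0 := by
  intro hH0
  obtain ⟨-, U, hU, hOU, hUsing⟩ := hiso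
  have hnhds : chartPt ⁻¹' U ∈ 𝓝 (0 : Fin 2 → ℂ) :=
    continuous_chartPt.continuousAt.preimage_mem_nhds
      (by rw [chartPt_eq_ptO_iff.mpr rfl]; exact hU.mem_nhds hOU)
  obtain ⟨q, hq, hqU, hq0⟩ := ((frequently_eval_add_eval_eq_zero
    (isHomogeneous_toBinaryForm hQh) (isHomogeneous_toBinaryForm hHh.pderiv) two_ne_zero
    ).and_eventually (Eventually.and (nhdsWithin_le_nhds hnhds) self_mem_nhdsWithin)).exists
  have hsing : chartPt q ∈ U ∩ {P | IsSingPt (quartic Q H) P} :=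
    ⟨hqU, isSingPt_chartPt hQ hH (isHomogeneous_quartic hQh hHh) hH0 hq⟩
  rw [hUsing] at hsing
  exact hq0 (chartPt_eq_ptO_iff.mp hsing)

end Quartic

theorem Q4_lines_through_O_in_plane_and_at_most_four
    (Q₂ H₄ : MvPolynomial (Fin 4) ℂ)
    (hQ₂ : Q₂.IsHomogeneous 2) (hQ₂v : Q₂ ∈ supported ℂ ({0, 1} : Set (Fin 4)))
    (hH₄ : H₄.IsHomogeneous 4) (hH₄v : H₄ ∈ supported ℂ ({0, 1, 2} : Set (Fin 4)))
    (f : MvPolynomial (Fin 4) ℂ)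
    (hf : f = X 3 ^ 2 * X 2 ^ 2 + X 3 * X 2 * Q₂ + H₄)
    (hiso : IsIsolatedPtOf ptO {Q : P3 | IsSingPt f Q}) :
    (∀ L : Set P3, IsLine L → L ⊆ zeroSet f → ptO ∈ L →
        L ⊆ {P : P3 | P.rep 2 = 0}) ∧
      {L : Set P3 | IsLine L ∧ L ⊆ zeroSet f ∧ ptO ∈ L}.Finite ∧
      {L : Set P3 | IsLine L ∧ L ⊆ zeroSet f ∧ ptO ∈ L}.ncard ≤ 4 := by
  change f = quartic Q₂ H₄ at hf
  subst hf
  have hQ : Q₂ ∈ supported ℂ ({0, 1, 2} : Set (Fin 4)) := supported_mono (by simp) hQ₂v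
  have hfh := isHomogeneous_quartic hQ₂ hH₄
  refine ⟨fun L hL hLS hO => ?_, ?_⟩
  · obtain ⟨v, hv, hv2, -, -, rfl⟩ := exists_eq_lineThrough_of_isLine hQ hH₄v hfh hL hLS hO
    exact lineThrough_subset_setOf_rep_eq_zero vecO_ne_zero hv rfl hv2
  obtain ⟨hfin, hcard⟩ := (isHomogeneous_toBinaryForm hH₄).finite_and_ncard_le four_ne_zero
    (toBinaryForm_ne_zero_of_isIsolatedPtOf hQ₂ hQ hH₄ hH₄v hiso)
  have hsub := setOf_lines_through_ptO_subset_image hQ hH₄ hH₄v hfh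
  exact ⟨(hfin.image _).subset hsub,
    (Set.ncard_le_ncard hsub (hfin.image _)).trans ((Set.ncard_image_le hfin).trans hcard)⟩
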